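/- There is no positive semidefinite operator H on ℂ²⊗ℂ² and bijection f : [0,‖H‖] → [0,1] such that for all pairs of qubit density matrices ρ₁, ρ₂, D(ρ₁,ρ₂) = f(min over couplings ρ₁₂ of ρ₁ and ρ₂ of Tr(H ρ₁₂)), where the minimum is over all density operators ρ₁₂ on ℂ²⊗ℂ² with Tr₂(ρ₁₂) = ρ₁ and Tr₁(ρ₁₂) = ρ₂, and D is the trace distance. (No-go quantum Kantorovich–Rubinstein theorem.) -/

import Mathlib

/-!
Two pure qubit states `v`, `w` have exactly one coupling, the product state `v ⊗ w`, so the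
optimal cost is `⟨v ⊗ w| H |v ⊗ w⟩`, while their trace distance is `|v₀ w₁ - v₁ w₀|`. If `f`
is injective, the cost of a product state therefore depends only on this determinant: it is
some `x₀` on every `v ⊗ v` and some `x₁ ≠ x₀` on every `v ⊗ v⊥`. Along
`|0⟩ ⊗ (a|0⟩ + b|1⟩)` with `a, b` real the cost runs through the segment `[x₀, x₁]`, and since
`f` maps it onto `[0, 1]`, bijectivity forces `{x₀, x₁} = {0, ‖H‖}`. But averaging over the six
eigenvectors of the Pauli matrices writes the expectation of `H` in the singlet as
`2 x₁ - x₀ ∈ {2‖H‖, -‖H‖}`, which lies outside `[0, ‖H‖]`.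
-/

open scoped Matrix Kronecker ComplexOrder

noncomputable section

namespace QEMD

variable {m n : Type*} [Fintype m] [Fintype n] [DecidableEq m] [DecidableEq n]

/-- Total square root: the PSD square root if `A` is PSD, else `0`. -/
def msqrt (A : Matrix n n ℂ) : Matrix n n ℂ :=
  letI := Classical.dec A.PosSemidef
  if h : A.PosSemidef then
    (h.1.eigenvectorUnitary : Matrix n n ℂ) *
      Matrix.diagonal ((↑) ∘ (Real.sqrt ∘ h.1.eigenvalues)) *
      (star h.1.eigenvectorUnitary : Matrix n n ℂ) else 0

/-- Trace norm `‖A‖₁ = Tr √(AᴴA)`. -/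
def traceNorm (A : Matrix n n ℂ) : ℝ :=
  ((msqrt (Aᴴ * A)).trace).re

/-- Trace distance `D(ρ,σ) = ½‖ρ-σ‖₁`. -/
def traceDist (ρ σ : Matrix n n ℂ) : ℝ := traceNorm (ρ - σ) / 2

/-- Fidelity `F(ρ,σ) = Tr √(√ρ σ √ρ)`. -/
def fidelity (ρ σ : Matrix n n ℂ) : ℝ :=
  ((msqrt (msqrt ρ * σ * msqrt ρ)).trace).re

/-- Density matrix predicate. -/
def IsDensity (ρ : Matrix n n ℂ) : Prop := ρ.PosSemidef ∧ ρ.trace = 1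

/-- Projector `|v⟩⟨v|` onto a vector. -/
def proj (v : n → ℂ) : Matrix n n ℂ := Matrix.of fun i j => v i * star (v j)

/-- Partial trace over the first (left) factor. -/
def traceLeft (ρ : Matrix (m × n) (m × n) ℂ) : Matrix n n ℂ :=
  Matrix.of fun i j => ∑ k, ρ (k, i) (k, j)

/-- Partial trace over the second (right) factor. -/
def traceRight (ρ : Matrix (m × n) (m × n) ℂ) : Matrix m m ℂ :=
  Matrix.of fun i j => ∑ k, ρ (i, k) (j, k)

/-- The swap operator `S|αβ⟩ = |βα⟩` on `ℂ^d ⊗ ℂ^d`. -/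
def swap (d : ℕ) : Matrix (Fin d × Fin d) (Fin d × Fin d) ℂ :=
  Matrix.of fun p q => if p.1 = q.2 ∧ p.2 = q.1 then 1 else 0

/-- Projection onto the symmetric subspace, `P_s = (I + S)/2`. -/
def Psym (d : ℕ) : Matrix (Fin d × Fin d) (Fin d × Fin d) ℂ := (2:ℂ)⁻¹ • (1 + swap d)

/-- Projection onto the antisymmetric subspace, `P_as = (I - S)/2`. -/
def Pasym (d : ℕ) : Matrix (Fin d × Fin d) (Fin d × Fin d) ℂ := (2:ℂ)⁻¹ • (1 - swap d)

/-- `ρAB` is a quantum coupling of `ρA` and `ρB`. -/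
def IsCoupling (ρAB : Matrix (m × n) (m × n) ℂ) (ρA : Matrix m m ℂ)
    (ρB : Matrix n n ℂ) : Prop :=
  IsDensity ρAB ∧ traceRight ρAB = ρA ∧ traceLeft ρAB = ρB

/-- The maximally entangled vector `|Φ⟩ = (1/√d) ∑ᵢ |i⟩|i⟩`. -/
def maxEnt (d : ℕ) : Fin d × Fin d → ℂ :=
  fun p => if p.1 = p.2 then ((1 / Real.sqrt d : ℝ) : ℂ) else 0


end QEMD

namespace Matrix.PosSemidef

variable {𝕜 n : Type*} [RCLike 𝕜] [Fintype n]

theorem mul_eq_zero_of_trace_mul_eq_zero {ρ P : Matrix n n 𝕜} (hρ : ρ.PosSemidef)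
    (hP : Pᴴ = P) (hPP : P * P = P) (h : (ρ * P).trace = 0) : ρ * P = 0 := by
  have hPρP : Pᴴ * ρ * P = 0 := by
    refine (hρ.conjTranspose_mul_mul_same P).trace_eq_zero_iff.1 ?_
    rw [hP, Matrix.mul_assoc, trace_mul_comm, Matrix.mul_assoc, hPP, h]
  refine ext_iff_mulVec.2 fun x => ?_
  rw [← mulVec_mulVec, zero_mulVec]
  refine (hρ.dotProduct_mulVec_zero_iff _).1 ?_
  simpa [← mulVec_mulVec, dotProduct_mulVec, star_mulVec, hP] using
    congrArg (fun M => star x ⬝ᵥ M *ᵥ x) hPρP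

theorem mul_eq_self_of_trace_mul_eq_trace [DecidableEq n] {ρ P : Matrix n n 𝕜}
    (hρ : ρ.PosSemidef) (hP : Pᴴ = P) (hPP : P * P = P) (h : (ρ * P).trace = ρ.trace) :
    ρ * P = ρ := by
  have := hρ.mul_eq_zero_of_trace_mul_eq_zero (P := 1 - P) (by simp [hP])
    (by simp [sub_mul, mul_sub, hPP]) (by simp [mul_sub, trace_sub, h])
  rwa [mul_sub, mul_one, sub_eq_zero, eq_comm] at this

end Matrix.PosSemidef

theorem Set.BijOn.eq_of_subset_of_subset_image {α β : Type*} {f : α → β} {s S : Set α}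
    {t : Set β} (hf : BijOn f s t) (hS : S ⊆ s) (ht : t ⊆ f '' S) : S = s :=
  hS.antisymm ((hf.injOn.image_subset_image_iff subset_rfl hS).1 (hf.image_eq ▸ ht))

namespace QEMD

open Matrix Complex Set

section PureStates

variable {m n : Type*}

theorem proj_eq_vecMulVec (v : n → ℂ) : proj v = vecMulVec v (star v) := rfl

theorem proj_posSemidef [Fintype n] (v : n → ℂ) : (proj v).PosSemidef :=
  posSemidef_vecMulVec_self_star v

theorem conjTranspose_proj [Fintype n] (v : n → ℂ) : (proj v)ᴴ = proj v :=
  (proj_posSemidef v).1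

theorem trace_proj [Fintype n] (v : n → ℂ) : (proj v).trace = star v ⬝ᵥ v := by
  rw [proj_eq_vecMulVec, trace_vecMulVec, dotProduct_comm]

theorem isDensity_proj [Fintype n] {v : n → ℂ} (hv : star v ⬝ᵥ v = 1) : IsDensity (proj v) :=
  ⟨proj_posSemidef v, by rw [trace_proj, hv]⟩

theorem trace_mul_proj [Fintype n] (A : Matrix n n ℂ) (u : n → ℂ) :
    (A * proj u).trace = star u ⬝ᵥ A *ᵥ u := by
  rw [proj_eq_vecMulVec, mul_vecMulVec, trace_vecMulVec, dotProduct_comm]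

theorem proj_mul_self [Fintype n] {v : n → ℂ} (hv : star v ⬝ᵥ v = 1) :
    proj v * proj v = proj v := by
  rw [proj_eq_vecMulVec, vecMulVec_mul_vecMulVec, hv, one_smul]

theorem proj_mul_mul_proj [Fintype n] (u : n → ℂ) (A : Matrix n n ℂ) :
    proj u * A * proj u = (star u ⬝ᵥ A *ᵥ u) • proj u := by
  rw [proj_eq_vecMulVec, Matrix.mul_assoc, mul_vecMulVec, vecMulVec_mul_vecMulVec,
    vecMulVec_smul]

theorem eq_smul_proj_of_mul_proj_eq_self [Fintype n] {ρ : Matrix n n ℂ} {u : n → ℂ}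
    (hρ : ρ.IsHermitian) (h : ρ * proj u = ρ) : ρ = (star u ⬝ᵥ ρ *ᵥ u) • proj u := by
  have h' : proj u * ρ = ρ := by
    simpa [conjTranspose_mul, conjTranspose_proj, hρ.eq] using congrArg conjTranspose h
  rw [← proj_mul_mul_proj, h', h]

def kronVec (v : m → ℂ) (w : n → ℂ) : m × n → ℂ := fun p => v p.1 * w p.2

theorem proj_kronVec (v : m → ℂ) (w : n → ℂ) : proj (kronVec v w) = proj v ⊗ₖ proj w := by
  ext ⟨i, j⟩ ⟨k, l⟩
  simp only [proj, kronVec, of_apply, kroneckerMap_apply, star_mul']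
  ring

theorem traceRight_kronecker [Fintype n] (A : Matrix m m ℂ) (B : Matrix n n ℂ) :
    traceRight (A ⊗ₖ B) = B.trace • A := by
  ext i j
  simp [traceRight, trace, kroneckerMap_apply, Finset.mul_sum, mul_comm]

theorem traceLeft_kronecker [Fintype m] (A : Matrix m m ℂ) (B : Matrix n n ℂ) :
    traceLeft (A ⊗ₖ B) = A.trace • B := by
  ext i j
  simp [traceLeft, trace, kroneckerMap_apply, Finset.sum_mul]

theorem trace_mul_kronecker_one [Fintype m] [Fintype n] [DecidableEq n]
    (ρ : Matrix (m × n) (m × n) ℂ) (A : Matrix m m ℂ) :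
    (ρ * (A ⊗ₖ 1)).trace = (traceRight ρ * A).trace := by
  simp only [trace, diag, mul_apply, kroneckerMap_apply, one_apply, Fintype.sum_prod_type,
    traceRight, of_apply, Finset.sum_mul, mul_ite, mul_one, mul_zero, Finset.sum_ite_eq',
    Finset.mem_univ, if_true]
  exact Finset.sum_congr rfl fun i _ => Finset.sum_comm

theorem trace_mul_one_kronecker [Fintype m] [Fintype n] [DecidableEq m]
    (ρ : Matrix (m × n) (m × n) ℂ) (B : Matrix n n ℂ) :
    (ρ * (1 ⊗ₖ B)).trace = (traceLeft ρ * B).trace := by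
  simp only [trace, diag, mul_apply, kroneckerMap_apply, one_apply, Fintype.sum_prod_type,
    traceLeft, of_apply, Finset.sum_mul, ite_mul, one_mul, zero_mul, mul_ite, mul_zero,
    Finset.sum_ite_irrel, Finset.sum_const_zero, Finset.sum_ite_eq', Finset.mem_univ, if_true]
  rw [Finset.sum_comm]
  exact Finset.sum_congr rfl fun i _ => Finset.sum_comm

variable [Fintype m] [Fintype n]

theorem isCoupling_proj_kronVec {v : m → ℂ} {w : n → ℂ} (hv : star v ⬝ᵥ v = 1)
    (hw : star w ⬝ᵥ w = 1) : IsCoupling (proj (kronVec v w)) (proj v) (proj w) := by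
  refine ⟨⟨proj_posSemidef _, ?_⟩, ?_, ?_⟩ <;> rw [proj_kronVec]
  · rw [trace_kronecker, trace_proj, trace_proj, hv, hw, one_mul]
  · rw [traceRight_kronecker, trace_proj, hw, one_smul]
  · rw [traceLeft_kronecker, trace_proj, hv, one_smul]

theorem star_kronVec_dotProduct_self {v : m → ℂ} {w : n → ℂ} (hv : star v ⬝ᵥ v = 1)
    (hw : star w ⬝ᵥ w = 1) : star (kronVec v w) ⬝ᵥ kronVec v w = 1 := by
  rw [← trace_proj]
  exact (isCoupling_proj_kronVec hv hw).1.2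

/- The partial traces pin `ρ` to the ranges of `proj v ⊗ 1` and of `1 ⊗ proj w`, whose
intersection is the line through `v ⊗ w`. -/
theorem eq_proj_kronVec_of_isCoupling [DecidableEq m] [DecidableEq n] {v : m → ℂ} {w : n → ℂ}
    (hv : star v ⬝ᵥ v = 1) (hw : star w ⬝ᵥ w = 1) {ρ : Matrix (m × n) (m × n) ℂ}
    (h : IsCoupling ρ (proj v) (proj w)) : ρ = proj (kronVec v w) := by
  obtain ⟨⟨hρ, htr⟩, hR, hL⟩ := h
  have hP : ρ * (proj v ⊗ₖ 1) = ρ := hρ.mul_eq_self_of_trace_mul_eq_trace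
    (by rw [conjTranspose_kronecker, conjTranspose_proj, conjTranspose_one])
    (by rw [← mul_kronecker_mul, proj_mul_self hv, one_mul])
    (by rw [trace_mul_kronecker_one, hR, proj_mul_self hv, trace_proj, hv, htr])
  have hQ : ρ * (1 ⊗ₖ proj w) = ρ := hρ.mul_eq_self_of_trace_mul_eq_trace
    (by rw [conjTranspose_kronecker, conjTranspose_proj, conjTranspose_one])
    (by rw [← mul_kronecker_mul, proj_mul_self hw, one_mul])
    (by rw [trace_mul_one_kronecker, hL, proj_mul_self hw, trace_proj, hw, htr])
  have hPQ : ρ * proj (kronVec v w) = ρ := by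
    rw [proj_kronVec, ← mul_one (proj v), ← one_mul (proj w), mul_kronecker_mul,
      ← Matrix.mul_assoc, hP, hQ]
  have hρ_eq := eq_smul_proj_of_mul_proj_eq_self hρ.1 hPQ
  have hc := congrArg trace hρ_eq
  rw [htr, trace_smul, trace_proj, star_kronVec_dotProduct_self hv hw, smul_eq_mul,
    mul_one] at hc
  rw [hρ_eq, ← hc, one_smul]

def productCost (H : Matrix (m × n) (m × n) ℂ) (v : m → ℂ) (w : n → ℂ) : ℝ :=
  ((H * proj (kronVec v w)).trace).re

theorem sInf_cost_isCoupling_proj [DecidableEq m] [DecidableEq n]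
    (H : Matrix (m × n) (m × n) ℂ) {v : m → ℂ} {w : n → ℂ}
    (hv : star v ⬝ᵥ v = 1) (hw : star w ⬝ᵥ w = 1) :
    sInf {x : ℝ | ∃ ρ12, IsCoupling ρ12 (proj v) (proj w) ∧ x = ((H * ρ12).trace).re}
      = productCost H v w := by
  suffices hset : {x : ℝ | ∃ ρ12, IsCoupling ρ12 (proj v) (proj w) ∧ x = ((H * ρ12).trace).re}
      = {productCost H v w} by
    rw [hset, csInf_singleton]
  ext x
  constructor
  · rintro ⟨ρ, hρ, rfl⟩
    rw [eq_proj_kronVec_of_isCoupling hv hw hρ]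
    rfl
  · rintro rfl
    exact ⟨_, isCoupling_proj_kronVec hv hw, rfl⟩

end PureStates

section OperatorNorm

open scoped Matrix.Norms.L2Operator MatrixOrder

theorem re_trace_mul_proj_mem_Icc {n : Type*} [Fintype n] [DecidableEq n] {H : Matrix n n ℂ}
    (hH : H.PosSemidef) {u : n → ℂ} (hu : star u ⬝ᵥ u = 1) :
    ((H * proj u).trace).re ∈ Icc 0 ‖H‖ := by
  rw [trace_mul_proj]
  refine ⟨hH.re_dotProduct_nonneg u, ?_⟩
  have hle : H ≤ algebraMap ℝ (Matrix n n ℂ) ‖H‖ := IsSelfAdjoint.le_algebraMap_norm_self hH.1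
  have := (Matrix.le_iff.1 hle).re_dotProduct_nonneg u
  rw [Algebra.algebraMap_eq_smul_one, sub_mulVec, dotProduct_sub, smul_mulVec,
    one_mulVec] at this
  simpa [hu] using this

theorem productCost_mem_Icc {m n : Type*} [Fintype m] [Fintype n] [DecidableEq m] [DecidableEq n]
    {H : Matrix (m × n) (m × n) ℂ} (hH : H.PosSemidef) {v : m → ℂ} {w : n → ℂ}
    (hv : star v ⬝ᵥ v = 1) (hw : star w ⬝ᵥ w = 1) : productCost H v w ∈ Icc 0 ‖H‖ :=
  re_trace_mul_proj_mem_Icc hH (star_kronVec_dotProduct_self hv hw)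

end OperatorNorm

theorem msqrt_eq_cfc {n : Type*} [Fintype n] [DecidableEq n] {A : Matrix n n ℂ}
    (hA : A.PosSemidef) : msqrt A = cfc Real.sqrt A := by
  rw [msqrt, dif_pos hA, hA.1.cfc_eq Real.sqrt]
  rfl

theorem msqrt_ofReal_smul_one {n : Type*} [Fintype n] [DecidableEq n] {c : ℝ} (hc : 0 ≤ c) :
    msqrt ((c : ℂ) • (1 : Matrix n n ℂ)) = (√c : ℂ) • 1 := by
  have hA : (c : ℂ) • (1 : Matrix n n ℂ) = algebraMap ℝ _ c := by
    rw [Algebra.algebraMap_eq_smul_one, Complex.coe_smul]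
  rw [msqrt_eq_cfc (PosSemidef.one.smul (Complex.zero_le_real.2 hc)), hA, cfc_algebraMap,
    Algebra.algebraMap_eq_smul_one, Complex.coe_smul]

theorem conjTranspose_mul_self_proj_sub_proj {v w : Fin 2 → ℂ} (hv : star v ⬝ᵥ v = 1)
    (hw : star w ⬝ᵥ w = 1) :
    (proj v - proj w)ᴴ * (proj v - proj w) = (normSq (v 0 * w 1 - v 1 * w 0) : ℂ) • 1 := by
  simp only [dotProduct, Fin.sum_univ_two, Pi.star_apply, RCLike.star_def] at hv hw
  rw [normSq_eq_conj_mul_self]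
  ext i j
  fin_cases i <;> fin_cases j <;> simp [Matrix.mul_apply, Fin.sum_univ_two, proj, one_apply]
  · linear_combination (v 0 * (starRingEnd ℂ) (v 0) - w 0 * (starRingEnd ℂ) (w 0)) * (hv - hw)
  · linear_combination (v 0 * (starRingEnd ℂ) (v 1) - w 0 * (starRingEnd ℂ) (w 1)) * (hv - hw)
  · linear_combination (v 1 * (starRingEnd ℂ) (v 0) - w 1 * (starRingEnd ℂ) (w 0)) * (hv - hw)
  · linear_combination (v 1 * (starRingEnd ℂ) (v 1) - w 1 * (starRingEnd ℂ) (w 1)) * (hv - hw)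

theorem traceDist_proj_proj {v w : Fin 2 → ℂ} (hv : star v ⬝ᵥ v = 1) (hw : star w ⬝ᵥ w = 1) :
    traceDist (proj v) (proj w) = ‖v 0 * w 1 - v 1 * w 0‖ := by
  rw [traceDist, traceNorm, conjTranspose_mul_self_proj_sub_proj hv hw,
    msqrt_ofReal_smul_one (normSq_nonneg _), trace_smul, trace_one, Fintype.card_fin,
    ← Complex.norm_def]
  simp

def ket0 : Fin 2 → ℂ := ![1, 0]

def ket1 : Fin 2 → ℂ := ![0, 1]

def invSqrtTwo : ℂ := ((√2)⁻¹ : ℝ)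

theorem invSqrtTwo_sq : invSqrtTwo ^ 2 = 2⁻¹ := by
  rw [invSqrtTwo, ← ofReal_pow, inv_pow, Real.sq_sqrt zero_le_two]
  push_cast
  rfl

theorem conj_invSqrtTwo : (starRingEnd ℂ) invSqrtTwo = invSqrtTwo := conj_ofReal _

def pauliEigvec : Fin 6 → Fin 2 → ℂ :=
  ![ket0, ket1, invSqrtTwo • ![1, 1], invSqrtTwo • ![1, -1], invSqrtTwo • ![1, I],
    invSqrtTwo • ![1, -I]]

def pauliEigvecOrth (i : Fin 6) : Fin 2 → ℂ := pauliEigvec (![1, 0, 3, 2, 5, 4] i)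

def singlet : Fin 2 × Fin 2 → ℂ := invSqrtTwo • (kronVec ket0 ket1 - kronVec ket1 ket0)

theorem star_pauliEigvec_dotProduct_self (i : Fin 6) :
    star (pauliEigvec i) ⬝ᵥ pauliEigvec i = 1 := by
  fin_cases i <;>
    simp [pauliEigvec, ket0, ket1, dotProduct, Fin.sum_univ_two, conj_invSqrtTwo] <;>
    ring_nf <;> simp [I_sq, invSqrtTwo_sq] <;> norm_num

theorem star_ket0_dotProduct_self : star ket0 ⬝ᵥ ket0 = 1 := star_pauliEigvec_dotProduct_self 0

theorem star_ket1_dotProduct_self : star ket1 ⬝ᵥ ket1 = 1 := star_pauliEigvec_dotProduct_self 1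

theorem norm_det_pauliEigvec_pauliEigvecOrth (i : Fin 6) :
    ‖pauliEigvec i 0 * pauliEigvecOrth i 1 - pauliEigvec i 1 * pauliEigvecOrth i 0‖ = 1 := by
  fin_cases i <;> simp [pauliEigvec, pauliEigvecOrth, ket0, ket1] <;>
    ring_nf <;> simp [invSqrtTwo_sq]

theorem star_singlet_dotProduct_self : star singlet ⬝ᵥ singlet = 1 := by
  simp [singlet, kronVec, ket0, ket1, dotProduct, Fintype.sum_prod_type, Fin.sum_univ_two,
    conj_invSqrtTwo]
  ring_nf
  simp [invSqrtTwo_sq]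

/- The six Pauli eigenvectors form a 2-design: `∑ proj (v ⊗ v) = 2 • Psym 2` and
`∑ proj (v ⊗ v⊥) = 3 - 2 • Psym 2`, while `Psym 2 + proj singlet = 1`. -/
theorem sum_proj_kronVec_pauliEigvecOrth :
    ∑ i, proj (kronVec (pauliEigvec i) (pauliEigvecOrth i))
      = (3 : ℝ) • proj singlet
        + (2⁻¹ : ℝ) • ∑ i, proj (kronVec (pauliEigvec i) (pauliEigvec i)) := by
  have h4 : invSqrtTwo ^ 4 = 4⁻¹ := by
    rw [show 4 = 2 * 2 by rfl, pow_mul, invSqrtTwo_sq]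
    norm_num
  ext ⟨a, b⟩ ⟨c, d⟩
  fin_cases a <;> fin_cases b <;> fin_cases c <;> fin_cases d <;>
    simp [Fin.sum_univ_six, proj, kronVec, pauliEigvec, pauliEigvecOrth, singlet, ket0, ket1,
      conj_invSqrtTwo] <;>
    ring_nf <;> simp [I_sq, invSqrtTwo_sq, h4] <;> norm_num

theorem re_trace_mul_proj_singlet_of_productCost_eq
    {H : Matrix (Fin 2 × Fin 2) (Fin 2 × Fin 2) ℂ} {x₀ x₁ : ℝ}
    (h₀ : ∀ i, productCost H (pauliEigvec i) (pauliEigvec i) = x₀)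
    (h₁ : ∀ i, productCost H (pauliEigvec i) (pauliEigvecOrth i) = x₁) :
    ((H * proj singlet).trace).re = 2 * x₁ - x₀ := by
  have h := congrArg (fun A => (H * A).trace.re) sum_proj_kronVec_pauliEigvecOrth
  simp only [Matrix.mul_sum, Matrix.mul_add, Matrix.mul_smul, trace_sum, trace_add, trace_smul,
    re_sum, add_re, smul_re] at h
  simp only [productCost] at h₀ h₁
  simp only [h₀, h₁, Finset.sum_const, Finset.card_fin, nsmul_eq_mul, smul_eq_mul] at h
  linarith

theorem star_real_dotProduct_self {a b : ℝ} (hab : a ^ 2 + b ^ 2 = 1) :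
    star ![(a : ℂ), b] ⬝ᵥ ![(a : ℂ), b] = 1 := by
  simp only [dotProduct, Fin.sum_univ_two, Pi.star_apply, RCLike.star_def, cons_val_zero,
    cons_val_one, conj_ofReal, ← sq]
  exact_mod_cast hab

theorem productCost_ket0_add_productCost_ket0_neg (H : Matrix (Fin 2 × Fin 2) (Fin 2 × Fin 2) ℂ)
    (a b : ℝ) :
    productCost H ket0 ![(a : ℂ), b] + productCost H ket0 ![(a : ℂ), ((-b : ℝ) : ℂ)]
      = 2 * (a ^ 2 * productCost H ket0 ket0 + b ^ 2 * productCost H ket0 ket1) := by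
  simp [productCost, trace_mul_proj, kronVec, ket0, ket1, dotProduct, mulVec,
    Fintype.sum_prod_type, Fin.sum_univ_two]
  ring

theorem two_mul_sub_notMem_Icc_of_segment_eq_Icc {x₀ x₁ N : ℝ}
    (hseg : segment ℝ x₀ x₁ = Icc 0 N) (hne : x₀ ≠ x₁) : 2 * x₁ - x₀ ∉ Icc 0 N := by
  rw [segment_eq_uIcc, uIcc, Icc_eq_Icc_iff inf_le_sup] at hseg
  rintro ⟨h0, hN⟩
  rcases le_total x₀ x₁ with h | h
  · rw [inf_eq_left.2 h, sup_eq_right.2 h] at hseg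
    exact hne (by linarith [hseg.1, hseg.2])
  · rw [inf_eq_right.2 h, sup_eq_left.2 h] at hseg
    exact hne (by linarith [hseg.1, hseg.2])

section NoGo

open scoped Matrix.Norms.L2Operator

variable {H : Matrix (Fin 2 × Fin 2) (Fin 2 × Fin 2) ℂ} {f : ℝ → ℝ}

def RepresentsPureTraceDist (H : Matrix (Fin 2 × Fin 2) (Fin 2 × Fin 2) ℂ) (f : ℝ → ℝ) :
    Prop :=
  ∀ v w : Fin 2 → ℂ, star v ⬝ᵥ v = 1 → star w ⬝ᵥ w = 1 →
    f (productCost H v w) = ‖v 0 * w 1 - v 1 * w 0‖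

theorem productCost_eq_of_norm_det_eq (hH : H.PosSemidef) (hf : InjOn f (Icc 0 ‖H‖))
    (hrep : RepresentsPureTraceDist H f) {v w v' w' : Fin 2 → ℂ} (hv : star v ⬝ᵥ v = 1)
    (hw : star w ⬝ᵥ w = 1) (hv' : star v' ⬝ᵥ v' = 1) (hw' : star w' ⬝ᵥ w' = 1)
    (h : ‖v 0 * w 1 - v 1 * w 0‖ = ‖v' 0 * w' 1 - v' 1 * w' 0‖) :
    productCost H v w = productCost H v' w' :=
  hf (productCost_mem_Icc hH hv hw) (productCost_mem_Icc hH hv' hw')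
    (by rw [hrep v w hv hw, hrep v' w' hv' hw', h])

theorem productCost_ket0_real (hH : H.PosSemidef) (hf : InjOn f (Icc 0 ‖H‖))
    (hrep : RepresentsPureTraceDist H f) {a b : ℝ} (hab : a ^ 2 + b ^ 2 = 1) :
    productCost H ket0 ![(a : ℂ), b]
      = a ^ 2 * productCost H ket0 ket0 + b ^ 2 * productCost H ket0 ket1 := by
  have := productCost_eq_of_norm_det_eq hH hf hrep star_ket0_dotProduct_self
    (star_real_dotProduct_self hab) star_ket0_dotProduct_self
    (star_real_dotProduct_self (a := a) (b := -b) (by rwa [neg_sq])) (by simp [ket0])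
  linarith [productCost_ket0_add_productCost_ket0_neg H a b]

theorem segment_productCost_eq_Icc (hH : H.PosSemidef) (hf : BijOn f (Icc 0 ‖H‖) (Icc 0 1))
    (hrep : RepresentsPureTraceDist H f) :
    segment ℝ (productCost H ket0 ket0) (productCost H ket0 ket1) = Icc 0 ‖H‖ := by
  have hket0 := star_ket0_dotProduct_self
  have hket1 := star_ket1_dotProduct_self
  refine hf.eq_of_subset_of_subset_image ((convex_Icc _ _).segment_subset
    (productCost_mem_Icc hH hket0 hket0) (productCost_mem_Icc hH hket0 hket1)) ?_
  rintro y ⟨hy0, hy1⟩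
  have hab : √(1 - y ^ 2) ^ 2 + y ^ 2 = 1 := by
    rw [Real.sq_sqrt (by nlinarith)]
    ring
  refine ⟨_, ⟨_, _, sq_nonneg _, sq_nonneg y, hab, rfl⟩, ?_⟩
  rw [smul_eq_mul, smul_eq_mul, ← productCost_ket0_real hH hf.injOn hrep hab,
    hrep _ _ hket0 (star_real_dotProduct_self hab)]
  simp [ket0, abs_of_nonneg hy0]

theorem productCost_ket0_ket0_ne_ket0_ket1 (hrep : RepresentsPureTraceDist H f) :
    productCost H ket0 ket0 ≠ productCost H ket0 ket1 := fun h => by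
  have h₀ := hrep _ _ star_ket0_dotProduct_self star_ket0_dotProduct_self
  have h₁ := hrep _ _ star_ket0_dotProduct_self star_ket1_dotProduct_self
  rw [h, h₁] at h₀
  simp [ket0, ket1] at h₀

theorem re_trace_mul_proj_singlet_eq (hH : H.PosSemidef) (hf : InjOn f (Icc 0 ‖H‖))
    (hrep : RepresentsPureTraceDist H f) :
    ((H * proj singlet).trace).re = 2 * productCost H ket0 ket1 - productCost H ket0 ket0 := by
  have hs := star_pauliEigvec_dotProduct_self
  refine re_trace_mul_proj_singlet_of_productCost_eq (fun i => ?_) (fun i => ?_)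
  · exact productCost_eq_of_norm_det_eq hH hf hrep (hs i) (hs i) star_ket0_dotProduct_self
      star_ket0_dotProduct_self (by simp [ket0, mul_comm])
  · exact productCost_eq_of_norm_det_eq hH hf hrep (hs i) (hs _) star_ket0_dotProduct_self
      star_ket1_dotProduct_self (by rw [norm_det_pauliEigvec_pauliEigvecOrth]; simp [ket0, ket1])

end NoGo

open scoped Matrix.Norms.L2Operator in
/-- No-go quantum Kantorovich–Rubinstein theorem. -/
theorem stmt8 :
    ¬ ∃ (H : Matrix (Fin 2 × Fin 2) (Fin 2 × Fin 2) ℂ) (f : ℝ → ℝ),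
      H.PosSemidef ∧
      Set.BijOn f (Set.Icc (0 : ℝ) ‖H‖) (Set.Icc (0 : ℝ) 1) ∧
      ∀ ρ1 ρ2 : Matrix (Fin 2) (Fin 2) ℂ, IsDensity ρ1 → IsDensity ρ2 →
        traceDist ρ1 ρ2 = f (sInf {x : ℝ | ∃ ρ12 : Matrix ((Fin 2) × (Fin 2))
            ((Fin 2) × (Fin 2)) ℂ,
          IsCoupling ρ12 ρ1 ρ2 ∧ x = ((H * ρ12).trace).re}) := by
  rintro ⟨H, f, hH, hf, hD⟩
  have hrep : RepresentsPureTraceDist H f := fun v w hv hw => by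
    rw [← traceDist_proj_proj hv hw, hD _ _ (isDensity_proj hv) (isDensity_proj hw),
      sInf_cost_isCoupling_proj H hv hw]
  exact two_mul_sub_notMem_Icc_of_segment_eq_Icc (segment_productCost_eq_Icc hH hf hrep)
    (productCost_ket0_ket0_ne_ket0_ket1 hrep)
    (re_trace_mul_proj_singlet_eq hH hf.injOn hrep ▸
      re_trace_mul_proj_mem_Icc hH star_singlet_dotProduct_self)
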